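/- Let X ∈ 𝓘 and i ∉ X be such that X ∪ {i} ∈ 𝓘, and let r' ≤ r be natural numbers with |X ∪ {i}| ≤ r'. Then the marginal loss from contracting i is larger at the smaller rank: f_r(X) − f_r(X ∪ {i}) ≤ f_{r'}(X) − f_{r'}(X ∪ {i}). -/

import Mathlib

open Finset

/-- `Y` is feasible for `(X, r)`: it is disjoint from `X`, `X ∪ Y` is independent in the
matroid `M`, and `|X ∪ Y| ≤ r`. -/
def MatroidFeasible {α : Type*} [DecidableEq α] (M : Matroid α) (r : ℕ)
    (X Y : Finset α) : Prop :=
  Disjoint X Y ∧ M.Indep ↑(X ∪ Y) ∧ (X ∪ Y).card ≤ r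

/-- `truncOpt M w r X = f_r(X)`: the maximum weight `w(Y)` over all sets `Y` feasible for
`(X, r)`, i.e. the weight of a maximum-weight basis of the matroid contracted by `X` and
truncated at rank `r`. -/
noncomputable def truncOpt {α : Type*} [DecidableEq α] (M : Matroid α) (w : α → ℝ)
    (r : ℕ) (X : Finset α) : ℝ :=
  sSup {t : ℝ | ∃ Y : Finset α, MatroidFeasible M r X Y ∧ t = ∑ e ∈ Y, w e}

/-!
Take optimal solutions `A` for `(X, r)` and `B` for `(X ∪ {i}, r')`. Augmenting the
independent set `X ∪ {i} ∪ B` from `X ∪ A` up to size `max |X ∪ {i} ∪ B| |X ∪ A|` moves a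
part `T ⊆ A` over to `B`; then `A \ T` is feasible for `(X, r')` and `B ∪ T` for
`(X ∪ {i}, r)`, and together they have the same weight as `A` and `B`. Hence
`f_r(X) + f_{r'}(X ∪ {i}) ≤ f_{r'}(X) + f_r(X ∪ {i})`.
-/

namespace Matroid

variable {α : Type*} [DecidableEq α] {M : Matroid α}

lemma Indep.exists_augment_finset_card_eq {I J : Finset α} (hI : M.Indep ↑I)
    (hJ : M.Indep ↑J) (hIJ : I.card ≤ J.card) :
    ∃ K : Finset α, I ⊆ K ∧ K ⊆ I ∪ J ∧ M.Indep ↑K ∧ K.card = J.card := by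
  induction hn : J.card - I.card generalizing I with
  | zero => exact ⟨I, subset_rfl, subset_union_left, hI, by omega⟩
  | succ n ih =>
    obtain ⟨e, heJ, heI, hind⟩ := hI.augment_finset hJ (by omega)
    rw [← coe_insert] at hind
    have hcard := card_insert_of_notMem heI
    obtain ⟨K, hIK, hKJ, hK, hKcard⟩ := ih hind (by omega) (by omega)
    refine ⟨K, (subset_insert e I).trans hIK, hKJ.trans ?_, hK, hKcard⟩
    exact union_subset (insert_subset (mem_union_right I heJ) subset_union_left)
      subset_union_right

lemma Indep.exists_augment_finset_card_eq_max {I J : Finset α} (hI : M.Indep ↑I)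
    (hJ : M.Indep ↑J) :
    ∃ K : Finset α, I ⊆ K ∧ K ⊆ I ∪ J ∧ M.Indep ↑K ∧ K.card = max I.card J.card := by
  rcases le_total I.card J.card with hIJ | hJI
  · rw [max_eq_right hIJ]
    exact hI.exists_augment_finset_card_eq hJ hIJ
  · exact ⟨I, subset_rfl, subset_union_left, hI, (max_eq_left hJI).symm⟩

end Matroid

section MatroidFeasible

variable {α : Type*} [DecidableEq α] {M : Matroid α}

lemma matroidFeasible_empty_iff {r : ℕ} {X : Finset α} :
    MatroidFeasible M r X ∅ ↔ M.Indep ↑X ∧ X.card ≤ r := by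
  simp [MatroidFeasible]

lemma MatroidFeasible.exists_exchange {r r' : ℕ} {X X' A B : Finset α} (hrr : r' ≤ r)
    (hXX' : X ⊆ X') (hA : MatroidFeasible M r X A) (hB : MatroidFeasible M r' X' B) :
    ∃ T ⊆ A, Disjoint B T ∧
      MatroidFeasible M r' X (A \ T) ∧ MatroidFeasible M r X' (B ∪ T) := by
  obtain ⟨hAd, hAi, hAc⟩ := hA
  obtain ⟨hBd, hBi, hBc⟩ := hB
  obtain ⟨K, hBK, hKAB, hK, hKcard⟩ := hBi.exists_augment_finset_card_eq_max hAi
  set T := K \ (X' ∪ B)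
  have hT_disj : Disjoint (X' ∪ B) T := disjoint_sdiff
  have hTA : T ⊆ A :=
    calc T ⊆ (X' ∪ B ∪ (X ∪ A)) \ (X' ∪ B) := sdiff_subset_sdiff hKAB subset_rfl
      _ = (X ∪ A) \ (X' ∪ B) := union_sdiff_left _ _
      _ ⊆ A := sdiff_le_iff.2 (union_subset_union (hXX'.trans subset_union_left) subset_rfl)
  have hXT : Disjoint X (A \ T) := disjoint_of_subset_right sdiff_subset hAd
  have hK_eq : X' ∪ (B ∪ T) = K := by rw [← union_assoc, union_sdiff_of_subset hBK]
  refine ⟨T, hTA, disjoint_of_subset_left subset_union_right hT_disj, ⟨hXT, ?_, ?_⟩,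
    ⟨disjoint_union_right.2 ⟨hBd, disjoint_of_subset_left subset_union_left hT_disj⟩, ?_, ?_⟩⟩
  · exact hAi.subset (by push_cast; exact Set.union_subset_union_right _ Set.sdiff_subset)
  · -- `|X ∪ (A \ T)| = |X ∪ A| - (|K| - |X' ∪ B|) ≤ |X' ∪ B|` because `|X ∪ A| ≤ |K|`
    have hTcard : T.card = K.card - (X' ∪ B).card := card_sdiff_of_subset hBK
    have := card_union_of_disjoint hAd
    have := card_le_card hTA
    rw [card_union_of_disjoint hXT, card_sdiff_of_subset hTA]
    omega
  · rwa [hK_eq]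
  · rw [hK_eq, hKcard]
    exact max_le (hBc.trans hrr) hAc

end MatroidFeasible

section truncOpt

variable {α : Type*} [DecidableEq α] [Fintype α] (M : Matroid α) (w : α → ℝ) (r : ℕ)
  (X : Finset α)

lemma finite_truncOpt_values :
    {t : ℝ | ∃ Y : Finset α, MatroidFeasible M r X Y ∧ t = ∑ e ∈ Y, w e}.Finite :=
  (Set.finite_range fun Y : Finset α => ∑ e ∈ Y, w e).subset <| by
    rintro t ⟨Y, -, rfl⟩
    exact ⟨Y, rfl⟩

variable {M r X}

lemma MatroidFeasible.sum_le_truncOpt {Y : Finset α} (hY : MatroidFeasible M r X Y) :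
    ∑ e ∈ Y, w e ≤ truncOpt M w r X :=
  le_csSup (finite_truncOpt_values M w r X).bddAbove ⟨Y, hY, rfl⟩

lemma exists_truncOpt_eq_sum (hX : M.Indep ↑X) (hXr : X.card ≤ r) :
    ∃ Y : Finset α, MatroidFeasible M r X Y ∧ truncOpt M w r X = ∑ e ∈ Y, w e :=
  Set.Nonempty.csSup_mem (s := {t : ℝ | ∃ Y, MatroidFeasible M r X Y ∧ t = ∑ e ∈ Y, w e})
    ⟨_, ∅, matroidFeasible_empty_iff.2 ⟨hX, hXr⟩, rfl⟩ (finite_truncOpt_values M w r X)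

lemma MatroidFeasible.sum_add_sum_le_truncOpt_add {r' : ℕ} {X' A B : Finset α}
    (hrr : r' ≤ r) (hXX' : X ⊆ X') (hA : MatroidFeasible M r X A)
    (hB : MatroidFeasible M r' X' B) :
    ∑ e ∈ A, w e + ∑ e ∈ B, w e ≤ truncOpt M w r' X + truncOpt M w r X' := by
  obtain ⟨T, hTA, hBT, hA', hB'⟩ := hA.exists_exchange hrr hXX' hB
  calc ∑ e ∈ A, w e + ∑ e ∈ B, w e
      = ∑ e ∈ A \ T, w e + ∑ e ∈ B ∪ T, w e := by
        rw [sum_union hBT, ← sum_sdiff hTA]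
        ring
    _ ≤ truncOpt M w r' X + truncOpt M w r X' :=
        add_le_add (hA'.sum_le_truncOpt w) (hB'.sum_le_truncOpt w)

end truncOpt

theorem truncOpt_marginal_loss_mono_rank_general
    {α : Type*} [DecidableEq α] [Fintype α] (M : Matroid α) (w : α → ℝ)
    (r r' : ℕ) (hrr : r' ≤ r)
    (X : Finset α) (i : α)
    (hXi : M.Indep ↑(insert i X))
    (hcard : (insert i X).card ≤ r') :
    truncOpt M w r X - truncOpt M w r (insert i X) ≤
      truncOpt M w r' X - truncOpt M w r' (insert i X) := by
  have hXXi : X ⊆ insert i X := subset_insert i X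
  obtain ⟨A, hA, hAopt⟩ := exists_truncOpt_eq_sum w (hXi.subset (by exact_mod_cast hXXi))
    ((card_le_card hXXi).trans (hcard.trans hrr))
  obtain ⟨B, hB, hBopt⟩ := exists_truncOpt_eq_sum w hXi hcard
  rw [sub_le_sub_iff, hAopt, hBopt]
  exact hA.sum_add_sum_le_truncOpt_add w hrr hXXi hB

/-- The marginal loss from contracting one element `i` is larger at a smaller rank:
for independent `X`, `i ∉ X` with `X ∪ {i}` independent, `|X ∪ {i}| ≤ r' ≤ r`, we have
`f_r(X) − f_r(X ∪ {i}) ≤ f_{r'}(X) − f_{r'}(X ∪ {i})`. -/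
theorem truncOpt_marginal_loss_mono_rank
    {α : Type*} [DecidableEq α] [Fintype α] (M : Matroid α) (w : α → ℝ)
    (hw : ∀ e, 0 ≤ w e) (r r' : ℕ) (hrr : r' ≤ r)
    (X : Finset α) (i : α) (hiX : i ∉ X)
    (hX : M.Indep ↑X) (hXi : M.Indep ↑(insert i X))
    (hcard : (insert i X).card ≤ r') :
    truncOpt M w r X - truncOpt M w r (insert i X) ≤
      truncOpt M w r' X - truncOpt M w r' (insert i X) :=
  truncOpt_marginal_loss_mono_rank_general M w r r' hrr X i hXi hcard
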